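/- arXiv:2506.24053 — 10 statements merged into one kernel-verified Lean document; each statement's English description precedes it below -/
import Mathlib

section
/- Let S = {s₁,…,sₙ} be a set of distinct positive integers and F = {f₁,…,f_l} a factor-closed set containing S. Define the n×l matrix E by E_{ik} = 1 if f_k divides s_i and 0 otherwise. Then for all indices i, j, the (i,j) entry of the matrix ∑_{k=1}^{l} φ(f_k) E_k E_kᵀ (where E_k is the k-th column of E) equals gcd(s_i, s_j). -/
/-!
The `(i, j)` entry sums `φ(f)` over the `f ∈ F` dividing both `sᵢ` and `sⱼ`, i.e. over the
divisors of `gcd(sᵢ, sⱼ)`, all of which lie in `F` because `F` is factor-closed and contains `sᵢ`.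
Gauss's identity `∑_{d ∣ m} φ(d) = m` then gives `gcd(sᵢ, sⱼ)`.
-/

open Finset

theorem ite_dvd_mul_ite_dvd {R : Type*} [MulZeroOneClass R] (a x y : ℕ) :
    ((if a ∣ x then 1 else 0 : R) * if a ∣ y then 1 else 0) =
      if a ∣ Nat.gcd x y then 1 else 0 := by
  by_cases hx : a ∣ x <;> by_cases hy : a ∣ y <;> simp [hx, hy, Nat.dvd_gcd_iff]

theorem image_filter_dvd_eq_divisors {ι : Type*} [Fintype ι] (f : ι → ℕ) {m : ℕ} (hm : m ≠ 0)
    (hdiv : ∀ d ∈ m.divisors, d ∈ Set.range f) :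
    (univ.filter (f · ∣ m)).image f = m.divisors := by
  ext d
  simp only [mem_image, mem_filter, mem_univ, true_and, Nat.mem_divisors]
  constructor
  · rintro ⟨k, hk, rfl⟩
    exact ⟨hk, hm⟩
  · intro hd
    obtain ⟨k, rfl⟩ := hdiv d (Nat.mem_divisors.2 hd)
    exact ⟨k, hd.1, rfl⟩

theorem sum_totient_filter_dvd {ι : Type*} [Fintype ι] {f : ι → ℕ} (hf : Function.Injective f)
    {m : ℕ} (hm : m ≠ 0) (hdiv : ∀ d ∈ m.divisors, d ∈ Set.range f) :
    ∑ k ∈ univ.filter (f · ∣ m), Nat.totient (f k) = m := by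
  rw [← sum_image (g := f) (fun x _ y _ h => hf h), image_filter_dvd_eq_divisors f hm hdiv,
    Nat.sum_totient]

theorem gcd_matrix_cp_decomposition_general (n l : ℕ) (s : Fin n → ℕ) (f : Fin l → ℕ)
    (hs : ∀ i, 0 < s i)
    (hfinj : Function.Injective f)
    (hsub : ∀ i, ∃ k, f k = s i)
    (hfc : ∀ k d, 0 < d → d ∣ f k → ∃ k', f k' = d)
    (E : Matrix (Fin n) (Fin l) ℝ)
    (hE : ∀ i k, E i k = if f k ∣ s i then 1 else 0) :
    ∀ i j, ∑ k, (Nat.totient (f k) : ℝ) * (E i k * E j k)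
      = (Nat.gcd (s i) (s j) : ℝ) := by
  intro i j
  obtain ⟨k₀, hk₀⟩ := hsub i
  have hgcd : Nat.gcd (s i) (s j) ≠ 0 := (Nat.gcd_pos_of_pos_left _ (hs i)).ne'
  have hdiv : ∀ d ∈ (Nat.gcd (s i) (s j)).divisors, d ∈ Set.range f := fun d hd =>
    hfc k₀ d (Nat.pos_of_mem_divisors hd)
      (hk₀ ▸ (Nat.dvd_of_mem_divisors hd).trans (Nat.gcd_dvd_left _ _))
  simp_rw [hE, ite_dvd_mul_ite_dvd, mul_ite, mul_one, mul_zero, ← sum_filter]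
  exact_mod_cast sum_totient_filter_dvd hfinj hgcd hdiv

theorem gcd_matrix_cp_decomposition (n l : ℕ) (s : Fin n → ℕ) (f : Fin l → ℕ)
    (hs : ∀ i, 0 < s i) (hsinj : Function.Injective s)
    (hf : ∀ k, 0 < f k) (hfinj : Function.Injective f)
    (hsub : ∀ i, ∃ k, f k = s i)
    (hfc : ∀ k d, 0 < d → d ∣ f k → ∃ k', f k' = d)
    (E : Matrix (Fin n) (Fin l) ℝ)
    (hE : ∀ i k, E i k = if f k ∣ s i then 1 else 0) :
    ∀ i j, ∑ k, (Nat.totient (f k) : ℝ) * (E i k * E j k)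
      = (Nat.gcd (s i) (s j) : ℝ) :=
  gcd_matrix_cp_decomposition_general n l s f hs hfinj hsub hfc E hE
end

section
/- Let S = {s₁,…,sₙ} be any set of n distinct positive integers. Then the n×n GCD matrix T with T_{ij} = gcd(s_i, s_j) is positive definite. -/
/-!
Smith's factorization: since `gcd a b = ∑ d ∣ gcd a b, φ d`, the GCD matrix equals
`E * diagonal φ * Eᵀ`, where `E i d = 1` if `d ∣ s i` and `0` otherwise, with `d` running over the
divisors of a common multiple of the `s i`. The diagonal is positive definite because `φ d > 0`,
so it remains to see that `x ᵥ* E = 0` forces `x = 0`: if `i₀` maximizes `s` on the support of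
`x`, the only `s j` with `x j ≠ 0` divisible by `s i₀` is `s i₀` itself, so `(x ᵥ* E) (s i₀) = x i₀`.
-/

open Finset Matrix

variable {ι R : Type*}

namespace Nat

def divisorIncidence (R : Type*) [Zero R] [One R] (s : ι → ℕ) (L : ℕ) :
    Matrix ι L.divisors R :=
  Matrix.of fun i d => if (d : ℕ) ∣ s i then 1 else 0

theorem of_gcd_eq_divisorIncidence_mul_diagonal_totient_mul_transpose [NonAssocSemiring R]
    {s : ι → ℕ} {L : ℕ} (hL : L ≠ 0) (hsL : ∀ i, s i ∣ L) :
    Matrix.of (fun i j => (gcd (s i) (s j) : R)) =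
      divisorIncidence R s L * diagonal (fun d : L.divisors => (φ d : R)) *
        (divisorIncidence R s L)ᵀ := by
  ext i j
  have hgL : gcd (s i) (s j) ∣ L := (gcd_dvd_left _ _).trans (hsL i)
  rw [mul_apply]
  simp only [mul_diagonal, transpose_apply, of_apply, divisorIncidence]
  rw [← sum_totient (gcd (s i) (s j)), ← divisors_filter_dvd_of_dvd hL hgL, cast_sum,
    sum_filter, ← sum_coe_sort L.divisors]
  refine sum_congr rfl fun d _ => ?_
  by_cases hi : (d : ℕ) ∣ s i <;> by_cases hj : (d : ℕ) ∣ s j <;> simp [dvd_gcd_iff, hi, hj]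

theorem vecMul_divisorIncidence_apply_of_forall_le [Fintype ι] [NonAssocSemiring R]
    {s : ι → ℕ} (hs : ∀ i, s i ≠ 0) (hsinj : Function.Injective s) {L : ℕ} (hL : L ≠ 0)
    (hsL : ∀ i, s i ∣ L) (z : ι → R) {i₀ : ι} (hi₀ : ∀ j, z j ≠ 0 → s j ≤ s i₀) :
    (z ᵥ* divisorIncidence R s L) ⟨s i₀, mem_divisors.2 ⟨hsL i₀, hL⟩⟩ = z i₀ := by
  simp only [vecMul, dotProduct, divisorIncidence, of_apply, mul_ite, mul_one, mul_zero]
  rw [sum_eq_single i₀ _ (fun h => absurd (mem_univ i₀) h), if_pos dvd_rfl]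
  intro j _ hj
  refine ite_eq_right_iff.2 fun hdvd => ?_
  by_contra hzj
  exact hj (hsinj ((hi₀ j hzj).antisymm (le_of_dvd (pos_of_ne_zero (hs j)) hdvd)))

theorem divisorIncidence_vecMul_injective [Fintype ι] [Ring R] {s : ι → ℕ}
    (hs : ∀ i, s i ≠ 0) (hsinj : Function.Injective s) {L : ℕ} (hL : L ≠ 0)
    (hsL : ∀ i, s i ∣ L) :
    Function.Injective (divisorIncidence R s L).vecMul := by
  suffices ∀ z : ι → R, z ᵥ* divisorIncidence R s L = 0 → z = 0 from fun x y hxy =>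
    sub_eq_zero.1 (this _ (by rw [sub_vecMul]; exact sub_eq_zero.2 hxy))
  classical
  intro z hz
  by_contra hz0
  obtain ⟨i₀, hi₀, hmax⟩ := (univ.filter fun j => z j ≠ 0).exists_max_image s
    (by simpa [Finset.Nonempty, funext_iff] using hz0)
  refine (mem_filter.1 hi₀).2 ?_
  rw [← vecMul_divisorIncidence_apply_of_forall_le hs hsinj hL hsL z
    fun j hj => hmax j (mem_filter.2 ⟨mem_univ j, hj⟩), hz, Pi.zero_apply]

end Nat

theorem gcd_matrix_posDef (n : ℕ) (s : Fin n → ℕ)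
    (hs : ∀ i, 0 < s i) (hsinj : Function.Injective s) :
    (Matrix.of fun i j : Fin n => (Nat.gcd (s i) (s j) : ℝ)).PosDef := by
  have hL : univ.lcm s ≠ 0 := by
    simpa [Finset.lcm_eq_zero_iff] using fun i => (hs i).ne'
  have hsL : ∀ i, s i ∣ univ.lcm s := fun i => Finset.dvd_lcm (mem_univ i)
  have hφ : ∀ d : (univ.lcm s).divisors, 0 < (Nat.totient d : ℝ) := fun d =>
    Nat.cast_pos.2 (Nat.totient_pos.2 (Nat.pos_of_mem_divisors d.2))
  rw [Nat.of_gcd_eq_divisorIncidence_mul_diagonal_totient_mul_transpose hL hsL,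
    ← conjTranspose_eq_transpose_of_trivial]
  exact (PosDef.diagonal hφ).mul_mul_conjTranspose_same
    (Nat.divisorIncidence_vecMul_injective (fun i => (hs i).ne') hsinj hL hsL)
end

section
/- For the set S = {1, 2, …, n}, the determinant of the n×n matrix with (i,j) entry gcd(i,j) equals φ(1)·φ(2)⋯φ(n). -/
/-! Gauss's identity `∑_{d ∣ m} φ d = m` gives `gcd a b = ∑_d [d ∣ a] φ d [d ∣ b]`, so the GCD matrix
factors as `A * diagonal φ * Aᵀ` with `A` the divisibility matrix of `1, …, n`. Ordering by size
makes `A` lower unitriangular, hence the determinant is `∏ φ d`. -/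

open Matrix Finset

theorem Fin.sum_ite_succ_dvd_eq_sum_divisors {M : Type*} [AddCommMonoid M] (f : ℕ → M)
    {m n : ℕ} (hm : 0 < m) (hmn : m ≤ n) :
    ∑ k : Fin n, (if k.val + 1 ∣ m then f (k.val + 1) else 0) = ∑ d ∈ m.divisors, f d := by
  have hIco : Ico 1 (m + 1) ⊆ Ico 1 (n + 1) := Ico_subset_Ico_right (by omega)
  calc ∑ k : Fin n, (if k.val + 1 ∣ m then f (k.val + 1) else 0)
      = ∑ d ∈ Ico 1 (n + 1), if d ∣ m then f d else 0 := by
        rw [Fin.sum_univ_eq_sum_range (fun k => if k + 1 ∣ m then f (k + 1) else 0),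
          range_eq_Ico, sum_Ico_add' (fun d => if d ∣ m then f d else 0)]
    _ = ∑ d ∈ Ico 1 (m + 1), if d ∣ m then f d else 0 := by
        refine (sum_subset hIco fun d _ hd => if_neg fun hdvd => hd ?_).symm
        have := Nat.le_of_dvd hm hdvd
        exact mem_Ico.2 ⟨Nat.pos_of_dvd_of_pos hdvd hm, by omega⟩
    _ = ∑ d ∈ m.divisors, f d := by rw [Nat.divisors, sum_filter]

variable (R : Type*) (n : ℕ)

def gcdMatrix [NatCast R] : Matrix (Fin n) (Fin n) R :=
  of fun i j => ((i.val + 1).gcd (j.val + 1) : R)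

def divisibilityMatrix [Zero R] [One R] : Matrix (Fin n) (Fin n) R :=
  of fun i k => if k.val + 1 ∣ i.val + 1 then 1 else 0

theorem divisibilityMatrix_isLowerTriangular [Zero R] [One R] :
    (divisibilityMatrix R n).IsLowerTriangular := by
  intro i k hik
  refine if_neg fun hdvd => ?_
  have := Nat.le_of_dvd i.val.succ_pos hdvd
  exact absurd (show i < k from hik) (by omega)

theorem det_divisibilityMatrix [CommRing R] : (divisibilityMatrix R n).det = 1 := by
  rw [det_of_isLowerTriangular _ (divisibilityMatrix_isLowerTriangular R n)]
  exact prod_eq_one fun i _ => if_pos dvd_rfl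

theorem gcdMatrix_eq_divisibilityMatrix_mul [CommSemiring R] :
    gcdMatrix R n = divisibilityMatrix R n * diagonal (fun k => ((k.val + 1).totient : R)) *
      (divisibilityMatrix R n)ᵀ := by
  ext i j
  rw [mul_apply]
  simp only [gcdMatrix, divisibilityMatrix, transpose_apply, of_apply, mul_diagonal, ite_mul,
    one_mul, zero_mul, mul_ite, mul_one, mul_zero, ← ite_and, ← Nat.dvd_gcd_iff]
  have hj : 0 < j.val + 1 := j.val.add_one_pos
  rw [Fin.sum_ite_succ_dvd_eq_sum_divisors (fun d => (d.totient : R))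
    (Nat.gcd_pos_of_pos_left _ hj) ((Nat.gcd_le_left _ hj).trans j.isLt), ← Nat.cast_sum,
    Nat.sum_totient, Nat.gcd_comm]

theorem det_gcdMatrix [CommRing R] :
    (gcdMatrix R n).det = ∏ i : Fin n, ((i.val + 1).totient : R) := by
  rw [gcdMatrix_eq_divisibilityMatrix_mul, det_mul, det_mul, det_transpose,
    det_divisibilityMatrix, det_diagonal, one_mul, mul_one]

theorem smith_determinant (n : ℕ) :
    (Matrix.of fun i j : Fin n => (Nat.gcd (i.val + 1) (j.val + 1) : ℝ)).det
      = ∏ i : Fin n, (Nat.totient (i.val + 1) : ℝ) :=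
  det_gcdMatrix ℝ n
end

section
/- Let S = {s₁,…,sₙ} be distinct positive integers and g : ℕ → ℝ a function with (g * μ)(k) > 0 for all positive integers k, where μ is the Möbius function. Then the n×n matrix with entries g(gcd(s_i, s_j)) is positive definite. -/
/-!
Put `f = g * μ`. Möbius inversion gives `g (gcd a b) = ∑_{d ∣ a, d ∣ b} f d`, so the matrix
factors as `Eᵀ D E`, where `D = diag (f d)` runs over the divisors `d` of `lcm s` and `E` is the
incidence matrix `E d i = [d ∣ s i]`. `D` is positive definite because `f > 0`, and `E` has trivial
kernel: if `x ≠ 0` and `s i` is maximal among the `s j` with `x j ≠ 0`, then `(E x) (s i) = x i`.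
-/

open ArithmeticFunction ArithmeticFunction.Moebius Matrix Finset

section MoebiusInversion

variable {R : Type*} [CommRing R]

def mulMoebius (g : ℕ → R) (k : ℕ) : R :=
  ∑ d ∈ k.divisors, g d * (μ (k / d) : R)

theorem sum_divisors_mulMoebius (g : ℕ → R) {k : ℕ} (hk : 0 < k) :
    ∑ d ∈ k.divisors, mulMoebius g d = g k := by
  refine sum_eq_iff_sum_mul_moebius_eq.mpr (fun n _ => ?_) k hk
  rw [Nat.sum_divisorsAntidiagonal' (f := fun a b => (μ a : R) * g b)]
  exact sum_congr rfl fun d _ => mul_comm _ _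

end MoebiusInversion

section DivisorIncidence

variable {ι : Type*} [Fintype ι]

def divisorIncidence (R : Type*) [Zero R] [One R] (s : ι → ℕ) :
    Matrix (univ.lcm s).divisors ι R :=
  of fun d i => if (d : ℕ) ∣ s i then 1 else 0

variable {R : Type*} {s : ι → ℕ}

theorem divisorIncidence_mulVec_apply [NonAssocSemiring R] (x : ι → R)
    (d : (univ.lcm s).divisors) :
    (divisorIncidence R s *ᵥ x) d = ∑ i with (d : ℕ) ∣ s i, x i := by
  simp [divisorIncidence, mulVec, dotProduct, sum_filter]

theorem eq_zero_of_divisorIncidence_mulVec_eq_zero [Ring R] (hs : ∀ i, 0 < s i)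
    (hsinj : Function.Injective s) {x : ι → R} (hx : divisorIncidence R s *ᵥ x = 0) :
    x = 0 := by
  classical
  by_contra hx0
  obtain ⟨i, hxi, hmax⟩ := exists_max_image {i | x i ≠ 0} s
    (by simpa [Finset.Nonempty, funext_iff] using hx0)
  have hsum : ∑ j with s i ∣ s j, x j = x i := by
    refine sum_eq_single_of_mem i (by simp) fun j hj hji => ?_
    by_contra hxj
    exact hji (hsinj (le_antisymm (hmax j (by simpa using hxj))
      (Nat.le_of_dvd (hs j) (mem_filter.mp hj).2)))
  have hsi : s i ∈ (univ.lcm s).divisors :=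
    Nat.mem_divisors.mpr ⟨dvd_lcm (mem_univ i), lcm_ne_zero_iff.mpr fun j _ => (hs j).ne'⟩
  have := congrFun hx ⟨s i, hsi⟩
  rw [divisorIncidence_mulVec_apply, hsum] at this
  exact (mem_filter.mp hxi).2 this

theorem divisorIncidence_mulVec_injective [Ring R] (hs : ∀ i, 0 < s i)
    (hsinj : Function.Injective s) : Function.Injective (divisorIncidence R s).mulVec :=
  fun x y hxy => sub_eq_zero.mp <|
    eq_zero_of_divisorIncidence_mulVec_eq_zero hs hsinj (by rw [mulVec_sub, hxy, sub_self])

theorem transpose_divisorIncidence_mul_diagonal_mul [CommSemiring R] (hs : ∀ i, 0 < s i)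
    (f : ℕ → R) :
    (divisorIncidence R s)ᵀ * diagonal (fun d : (univ.lcm s).divisors => f d) *
        divisorIncidence R s = of fun i j => ∑ d ∈ (Nat.gcd (s i) (s j)).divisors, f d := by
  ext i j
  have hgcd : {d ∈ (univ.lcm s).divisors | d ∣ s i ∧ d ∣ s j} =
      (Nat.gcd (s i) (s j)).divisors := by
    simpa only [Nat.dvd_gcd_iff] using Nat.divisors_filter_dvd_of_dvd
      (lcm_ne_zero_iff.mpr fun j _ => (hs j).ne')
      ((Nat.gcd_dvd_left _ _).trans (dvd_lcm (mem_univ i)))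
  rw [of_apply, ← hgcd, sum_filter, ← sum_coe_sort, Matrix.mul_apply]
  refine sum_congr rfl fun d _ => ?_
  simp [divisorIncidence, mul_diagonal, ← ite_and, and_comm]

theorem posDef_of_gcd_eq_sum_divisors (hs : ∀ i, 0 < s i) (hsinj : Function.Injective s)
    (f : ℕ → ℝ) (hf : ∀ d, 0 < d → 0 < f d) :
    (of fun i j => ∑ d ∈ (Nat.gcd (s i) (s j)).divisors, f d).PosDef := by
  rw [← transpose_divisorIncidence_mul_diagonal_mul hs f, ← conjTranspose_eq_transpose_of_trivial]
  have hD : (diagonal fun d : (univ.lcm s).divisors => f d).PosDef :=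
    .diagonal fun d => hf d (Nat.pos_of_mem_divisors d.2)
  exact hD.conjTranspose_mul_mul_same (divisorIncidence_mulVec_injective hs hsinj)

end DivisorIncidence

open ArithmeticFunction ArithmeticFunction.Moebius in
theorem g_gcd_matrix_posDef (n : ℕ) (s : Fin n → ℕ) (g : ℕ → ℝ)
    (hs : ∀ i, 0 < s i) (hsinj : Function.Injective s)
    (hpos : ∀ k : ℕ, 0 < k → 0 < ∑ d ∈ k.divisors, g d * (μ (k / d) : ℝ)) :
    (Matrix.of fun i j : Fin n => g (Nat.gcd (s i) (s j))).PosDef := by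
  have hg : ∀ i j, g (Nat.gcd (s i) (s j)) =
      ∑ d ∈ (Nat.gcd (s i) (s j)).divisors, mulMoebius g d := fun i j =>
    (sum_divisors_mulMoebius g (Nat.gcd_pos_of_pos_left _ (hs i))).symm
  simp only [hg]
  exact posDef_of_gcd_eq_sum_divisors hs hsinj (mulMoebius g) hpos
end

section
/- Let S = {s₁,…,sₙ} be any set of distinct positive integers and r > 0 a real number. Then the n×n matrix with entries gcd(s_i, s_j)^r is positive definite; in particular the GCD matrix is infinitely divisible. -/
/-!
Write `m ^ r = ∑_{d ∣ m} J_r d`, where `J_r = μ * (· ^ r)` is Jordan's totient with real exponent.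
`J_r` is multiplicative with `J_r (p ^ (k + 1)) = p ^ ((k + 1) r) - p ^ (k r) > 0`, so it is positive.
Hence the matrix is `E * diagonal J_r * Eᵀ`, where `E i d = [d ∣ s i]` and `d` runs over the
divisors of the `s i`. The rows of `E` are independent: if `x ≠ 0` and `s i₀` is largest among the
`s i` with `x i ≠ 0`, then the `s i₀`-th entry of `x ᵥ* E` is `x i₀`, because the `s i` are distinct.
-/

open Finset Matrix
open scoped ArithmeticFunction.Moebius ArithmeticFunction.zeta

namespace ArithmeticFunction

noncomputable def natRpow (r : ℝ) : ArithmeticFunction ℝ :=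
  ⟨fun n => if n = 0 then 0 else (n : ℝ) ^ r, by simp⟩

@[simp]
lemma natRpow_apply (r : ℝ) {n : ℕ} (hn : n ≠ 0) : natRpow r n = (n : ℝ) ^ r := by
  simp [natRpow, hn]

lemma isMultiplicative_natRpow (r : ℝ) : (natRpow r).IsMultiplicative := by
  refine ⟨by simp, fun {m n} _ => ?_⟩
  rcases eq_or_ne m 0 with rfl | hm
  · simp [natRpow]
  rcases eq_or_ne n 0 with rfl | hn
  · simp [natRpow]
  simp [hm, hn, Real.mul_rpow]

noncomputable def jordan (r : ℝ) : ArithmeticFunction ℝ :=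
  (μ : ArithmeticFunction ℝ) * natRpow r

lemma isMultiplicative_jordan (r : ℝ) : (jordan r).IsMultiplicative :=
  isMultiplicative_moebius.intCast.mul (isMultiplicative_natRpow r)

lemma sum_divisors_jordan (r : ℝ) {m : ℕ} (hm : m ≠ 0) :
    ∑ d ∈ m.divisors, jordan r d = (m : ℝ) ^ r := by
  have h : jordan r * ζ = natRpow r := by
    rw [jordan, mul_comm (μ : ArithmeticFunction ℝ), mul_assoc, coe_moebius_mul_coe_zeta,
      mul_one]
  rw [← coe_mul_zeta_apply, h, natRpow_apply r hm]

lemma jordan_prime_pow_succ (r : ℝ) {p : ℕ} (hp : p.Prime) (k : ℕ) :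
    jordan r (p ^ (k + 1)) = ((p ^ (k + 1) : ℕ) : ℝ) ^ r - ((p ^ k : ℕ) : ℝ) ^ r := by
  have h (k : ℕ) : ∑ i ∈ range (k + 1), jordan r (p ^ i) = ((p ^ k : ℕ) : ℝ) ^ r :=
    (Nat.sum_divisors_prime_pow hp).symm.trans (sum_divisors_jordan r (pow_ne_zero k hp.ne_zero))
  rw [← h (k + 1), ← h k, sum_range_succ _ (k + 1), add_sub_cancel_left]

lemma jordan_pos {r : ℝ} (hr : 0 < r) {n : ℕ} (hn : n ≠ 0) : 0 < jordan r n := by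
  rw [(isMultiplicative_jordan r).multiplicative_factorization _ hn]
  refine prod_pos fun p hp => ?_
  obtain ⟨k, hk⟩ := Nat.exists_eq_succ_of_ne_zero (Finsupp.mem_support_iff.mp hp)
  have hp : p.Prime := Nat.prime_of_mem_primeFactors hp
  simp only [hk, jordan_prime_pow_succ r hp, sub_pos]
  exact Real.rpow_lt_rpow (by positivity)
    (by exact_mod_cast Nat.pow_lt_pow_succ hp.one_lt) hr

end ArithmeticFunction

namespace Matrix

variable {ι : Type*}

def divisorIncidence (s : ι → ℕ) (D : Finset ℕ) : Matrix ι D ℝ :=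
  of fun i d => if (d : ℕ) ∣ s i then 1 else 0

lemma divisorIncidence_mul_diagonal_mul_conjTranspose_apply [Fintype ι] {s : ι → ℕ}
    (hs : ∀ i, s i ≠ 0) {D : Finset ℕ} (hD : ∀ i, (s i).divisors ⊆ D) (f : ℕ → ℝ) (i j : ι) :
    (divisorIncidence s D * diagonal (fun d : D => f d) * (divisorIncidence s D)ᴴ) i j =
      ∑ d ∈ (Nat.gcd (s i) (s j)).divisors, f d := by
  have hgcd : (Nat.gcd (s i) (s j)).divisors = D.filter fun d => d ∣ s i ∧ d ∣ s j := by
    ext d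
    simp only [Nat.mem_divisors, mem_filter, Nat.dvd_gcd_iff]
    exact ⟨fun ⟨h, _⟩ => ⟨hD i (Nat.mem_divisors.mpr ⟨h.1, hs i⟩), h⟩,
      fun ⟨_, h⟩ => ⟨h, Nat.gcd_ne_zero_left (hs i)⟩⟩
  rw [mul_apply]
  simp only [mul_diagonal, conjTranspose_apply, divisorIncidence, of_apply, star_trivial]
  rw [hgcd, sum_filter, ← sum_coe_sort D]
  refine sum_congr rfl fun d _ => ?_
  split_ifs <;> simp_all

lemma divisorIncidence_vecMul_injective [Fintype ι] {s : ι → ℕ} (hs : ∀ i, s i ≠ 0)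
    (hinj : Function.Injective s) {D : Finset ℕ} (hD : ∀ i, s i ∈ D) :
    Function.Injective (divisorIncidence s D).vecMul := by
  suffices h : ∀ x, x ≠ 0 → x ᵥ* divisorIncidence s D ≠ 0 by
    intro x y hxy
    by_contra hne
    exact h (x - y) (sub_ne_zero.mpr hne) (by rw [sub_vecMul, sub_eq_zero]; exact hxy)
  intro x hx
  obtain ⟨i₀, hi₀, hmax⟩ := exists_max_image (univ.filter fun i => x i ≠ 0) s <| by
    obtain ⟨i, hi⟩ := Function.ne_iff.mp hx
    exact ⟨i, by simpa using hi⟩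
  have hentry : (x ᵥ* divisorIncidence s D) ⟨s i₀, hD i₀⟩ = x i₀ := by
    rw [vecMul, dotProduct, sum_eq_single i₀]
    · simp [divisorIncidence]
    · intro i _ hi
      simp only [divisorIncidence, of_apply, mul_ite, mul_one, mul_zero]
      refine ite_eq_right_iff.mpr fun hdvd => ?_
      by_contra hxi
      exact hi (hinj (le_antisymm (hmax i (by simpa using hxi))
        (Nat.le_of_dvd (Nat.pos_of_ne_zero (hs i)) hdvd)))
    · simp
  intro h
  exact (mem_filter.mp hi₀).2 (by rw [← hentry, h, Pi.zero_apply])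

theorem posDef_of_sum_divisors_gcd [Fintype ι] {s : ι → ℕ} (hs : ∀ i, s i ≠ 0)
    (hinj : Function.Injective s) {f : ℕ → ℝ} (hf : ∀ d, d ≠ 0 → 0 < f d) :
    (of fun i j => ∑ d ∈ (Nat.gcd (s i) (s j)).divisors, f d).PosDef := by
  set D := univ.biUnion fun i => (s i).divisors
  have hD i : (s i).divisors ⊆ D := subset_biUnion_of_mem (fun i => (s i).divisors) (mem_univ i)
  have hpos (d : D) : 0 < f d := by
    obtain ⟨i, -, hi⟩ := mem_biUnion.mp d.2
    exact hf d (Nat.pos_of_mem_divisors hi).ne'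
  convert (PosDef.diagonal hpos).mul_mul_conjTranspose_same
    (divisorIncidence_vecMul_injective hs hinj fun i => hD i (Nat.mem_divisors_self _ (hs i)))
  ext i j
  exact (divisorIncidence_mul_diagonal_mul_conjTranspose_apply hs hD f i j).symm

end Matrix

theorem gcd_matrix_rpow_posDef (n : ℕ) (s : Fin n → ℕ) (r : ℝ) (hr : 0 < r)
    (hs : ∀ i, 0 < s i) (hsinj : Function.Injective s) :
    (Matrix.of fun i j : Fin n => (Nat.gcd (s i) (s j) : ℝ) ^ r).PosDef := by
  have hs' i : s i ≠ 0 := (hs i).ne'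
  have hentry i j : (Nat.gcd (s i) (s j) : ℝ) ^ r =
      ∑ d ∈ (Nat.gcd (s i) (s j)).divisors, ArithmeticFunction.jordan r d :=
    (ArithmeticFunction.sum_divisors_jordan r (Nat.gcd_ne_zero_left (hs' i))).symm
  simp only [hentry]
  exact posDef_of_sum_divisors_gcd hs' hsinj fun d hd => ArithmeticFunction.jordan_pos hr hd
end

section
/- Let S = {s₁,…,sₙ} be a GCD-closed set of distinct positive integers (gcd(s_i,s_j) ∈ S for all i,j), and define the generalized Euler totient Ψ_S on S inductively by Ψ_S(s_j) = s_j − ∑_{s_i ∣ s_j, s_i ≠ s_j, s_i ∈ S} Ψ_S(s_i). Then the determinant of the GCD matrix (gcd(s_i,s_j)) equals ∏_{i=1}^{n} Ψ_S(s_i). -/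
/-!
Let `L` be the divisibility matrix `L i k = [s k ∣ s i]`. Since `Ψ` is defined so that
`∑_{s k ∣ s m} Ψ k = s m`, GCD-closedness gives
`(L · diag Ψ · Lᵀ) i j = ∑_{s k ∣ gcd (s i) (s j)} Ψ k = gcd (s i) (s j)`.
Ordering the indices by the size of `s i`, the matrix `L` is unitriangular, so `det L = 1`
and the determinant of the GCD matrix is `∏ Ψ`.
-/

open Matrix Finset

section

variable {ι R : Type*} [Fintype ι] [CommRing R]

theorem sum_filter_dvd_eq_of_eq_sub {s : ι → ℕ} (hinj : Function.Injective s) {Psi : ι → R}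
    (hPsi : ∀ j, Psi j = (s j : R)
      - ∑ i ∈ univ.filter (fun i => s i ∣ s j ∧ s i ≠ s j), Psi i) (j : ι) :
    ∑ k ∈ univ.filter (fun k => s k ∣ s j), Psi k = s j := by
  classical
  have hstrict : univ.filter (fun i => s i ∣ s j ∧ s i ≠ s j)
      = (univ.filter (fun k => s k ∣ s j)).erase j := by
    ext k
    simp [hinj.ne_iff, and_comm]
  rw [← add_sum_erase _ _ ((mem_filter_univ j).mpr (dvd_refl (s j))), ← hstrict, hPsi j]
  ring

namespace Matrix

def divisibilityMatrix (s : ι → ℕ) : Matrix ι ι R :=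
  of fun i k => if s k ∣ s i then 1 else 0

theorem divisibilityMatrix_mul_diagonal_mul_transpose_apply [DecidableEq ι] (s : ι → ℕ)
    (d : ι → R) (i j : ι) :
    (divisibilityMatrix s * diagonal d * (divisibilityMatrix s)ᵀ : Matrix ι ι R) i j
      = ∑ k ∈ univ.filter (fun k => s k ∣ s i ∧ s k ∣ s j), d k := by
  rw [mul_apply, sum_filter]
  refine sum_congr rfl fun k _ => ?_
  by_cases hi : s k ∣ s i <;> by_cases hj : s k ∣ s j <;> simp [divisibilityMatrix, hi, hj]

theorem det_divisibilityMatrix [DecidableEq ι] {s : ι → ℕ} (hs : ∀ i, 0 < s i)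
    (hinj : Function.Injective s) :
    (divisibilityMatrix s : Matrix ι ι R).det = 1 := by
  let _ : LinearOrder ι := LinearOrder.lift' s hinj
  have hlower : (divisibilityMatrix s : Matrix ι ι R).IsLowerTriangular := fun i j hij =>
    if_neg fun hdvd => (Nat.le_of_dvd (hs i) hdvd).not_gt hij
  convert det_of_isLowerTriangular _ hlower
  simp [divisibilityMatrix]

theorem of_gcd_eq_divisibilityMatrix_mul_diagonal_mul_transpose [DecidableEq ι] {s : ι → ℕ}
    (hgc : ∀ i j, ∃ k, s k = Nat.gcd (s i) (s j)) {d : ι → R}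
    (hd : ∀ m, ∑ k ∈ univ.filter (fun k => s k ∣ s m), d k = s m) :
    (of fun i j => (Nat.gcd (s i) (s j) : R) : Matrix ι ι R)
      = divisibilityMatrix s * diagonal d * (divisibilityMatrix s)ᵀ := by
  ext i j
  obtain ⟨m, hm⟩ := hgc i j
  simp_rw [divisibilityMatrix_mul_diagonal_mul_transpose_apply, ← Nat.dvd_gcd_iff, ← hm, hd,
    of_apply, hm]

end Matrix

end

theorem gcd_matrix_det_gcd_closed (n : ℕ) (s : Fin n → ℕ)
    (hs : ∀ i, 0 < s i) (hsinj : Function.Injective s)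
    (hgc : ∀ i j, ∃ k, s k = Nat.gcd (s i) (s j))
    (Psi : Fin n → ℝ)
    (hPsi : ∀ j, Psi j = (s j : ℝ)
      - ∑ i ∈ Finset.univ.filter (fun i => s i ∣ s j ∧ s i ≠ s j), Psi i) :
    (Matrix.of fun i j : Fin n => (Nat.gcd (s i) (s j) : ℝ)).det = ∏ i, Psi i := by
  rw [of_gcd_eq_divisibilityMatrix_mul_diagonal_mul_transpose hgc
      (sum_filter_dvd_eq_of_eq_sub hsinj hPsi),
    det_mul, det_mul, det_transpose, det_divisibilityMatrix hs hsinj, det_diagonal, one_mul,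
    mul_one]
end

section
/- Let S = {s₁,…,sₙ} be a GCD-closed set of distinct positive integers with incidence matrix E (E_{ij} = 1 if s_j ∣ s_i, else 0) and let D be the diagonal matrix with entries Ψ_S(s_i). Then the GCD matrix (gcd(s_i, s_j)) equals E D Eᵀ. -/
/-!
Expanding the product, `(E D Eᵀ)ᵢⱼ` is the sum of `Ψ_S(s_k)` over the `s_k` dividing both `s_i`
and `s_j`, i.e. over the divisors in `S` of `gcd(s_i, s_j) = s_m ∈ S`. The recursion defining
`Ψ_S` says precisely that the sum of `Ψ_S` over the divisors of `s_m` in `S` is `s_m`.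
-/

open Finset Matrix

theorem sum_filter_dvd_eq_of_eq_sub_sum_proper {ι α R : Type*} [Fintype ι] [Monoid α]
    [DecidableEq α] [DecidableRel (α := α) (· ∣ ·)] [AddCommGroup R] {s : ι → α}
    (hs : Function.Injective s) {g Ψ : ι → R}
    (hΨ : ∀ j, Ψ j = g j - ∑ i ∈ univ.filter (fun i => s i ∣ s j ∧ s i ≠ s j), Ψ i) (j : ι) :
    ∑ k ∈ univ.filter (fun k => s k ∣ s j), Ψ k = g j := by
  classical
  have hsplit : univ.filter (fun k => s k ∣ s j) =
      insert j (univ.filter (fun i => s i ∣ s j ∧ s i ≠ s j)) := by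
    ext k
    by_cases hkj : k = j
    · simp [hkj]
    · simp [hkj, hs.ne hkj]
  rw [hsplit, sum_insert (by simp), hΨ j, sub_add_cancel]

theorem of_ite_mul_diagonal_mul_transpose_apply {ι R : Type*} [Fintype ι] [DecidableEq ι]
    [NonAssocSemiring R] (p : ι → ι → Prop) [DecidableRel p] (d : ι → R) (i j : ι) :
    (of (fun i k => if p i k then (1 : R) else 0) * diagonal d *
        (of fun i k => if p i k then (1 : R) else 0)ᵀ) i j =
      ∑ k ∈ univ.filter (fun k => p i k ∧ p j k), d k := by
  rw [mul_apply, sum_filter]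
  refine sum_congr rfl fun k _ => ?_
  simp only [mul_diagonal, transpose_apply, of_apply]
  split_ifs <;> simp_all

theorem gcd_matrix_factorization_gcd_closed_general (n : ℕ) (s : Fin n → ℕ)
    (hsinj : Function.Injective s)
    (hgc : ∀ i j, ∃ k, s k = Nat.gcd (s i) (s j))
    (Psi : Fin n → ℝ)
    (hPsi : ∀ j, Psi j = (s j : ℝ)
      - ∑ i ∈ Finset.univ.filter (fun i => s i ∣ s j ∧ s i ≠ s j), Psi i)
    (E : Matrix (Fin n) (Fin n) ℝ)
    (hE : ∀ i j, E i j = if s j ∣ s i then 1 else 0) :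
    (Matrix.of fun i j : Fin n => (Nat.gcd (s i) (s j) : ℝ))
      = E * Matrix.diagonal Psi * E.transpose := by
  obtain rfl : E = of fun i k => if s k ∣ s i then 1 else 0 := ext hE
  ext i j
  obtain ⟨m, hm⟩ := hgc i j
  have hdiv : univ.filter (fun k => s k ∣ s i ∧ s k ∣ s j) = univ.filter (fun k => s k ∣ s m) :=
    filter_congr fun k _ => by rw [hm, Nat.dvd_gcd_iff]
  rw [of_ite_mul_diagonal_mul_transpose_apply, hdiv,
    sum_filter_dvd_eq_of_eq_sub_sum_proper hsinj hPsi m, hm, of_apply]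

theorem gcd_matrix_factorization_gcd_closed (n : ℕ) (s : Fin n → ℕ)
    (hs : ∀ i, 0 < s i) (hsinj : Function.Injective s)
    (hgc : ∀ i j, ∃ k, s k = Nat.gcd (s i) (s j))
    (Psi : Fin n → ℝ)
    (hPsi : ∀ j, Psi j = (s j : ℝ)
      - ∑ i ∈ Finset.univ.filter (fun i => s i ∣ s j ∧ s i ≠ s j), Psi i)
    (E : Matrix (Fin n) (Fin n) ℝ)
    (hE : ∀ i j, E i j = if s j ∣ s i then 1 else 0) :
    (Matrix.of fun i j : Fin n => (Nat.gcd (s i) (s j) : ℝ))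
      = E * Matrix.diagonal Psi * E.transpose :=
  gcd_matrix_factorization_gcd_closed_general n s hsinj hgc Psi hPsi E hE
end

section
/- Let S = {s₁,…,sₙ} be distinct positive integers, F = {f₁,…,f_l} a factor-closed set containing S, and E ∈ ℝ^{n×l} the matrix with E_{ik} = 1 if f_k ∣ s_i and 0 otherwise. Then the columns of E span ℝⁿ, i.e., rank(E) = n. -/
/-!
Since `S ⊆ F`, the columns of `E` indexed by `S` form the square matrix `[s_j ∣ s_i]`. Divisibility
between positive integers implies `≤`, so ordering `S` increasingly makes this matrix lower
unitriangular: its determinant is `1`, and already these `n` columns have rank `n`.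
-/

open Function

namespace Matrix

variable {m α R : Type*} [Fintype m] [DecidableEq m] [LinearOrder α] [CommRing R]

theorem det_eq_one_of_unitriangular_along (M : Matrix m m R) {x : m → α} (hx : Injective x)
    (hlt : ∀ i j, x i < x j → M i j = 0) (hdiag : ∀ i, M i i = 1) : M.det = 1 := by
  let _ : LinearOrder m := LinearOrder.lift' x hx
  convert det_of_isLowerTriangular M hlt
  exact (Finset.prod_eq_one fun i _ => hdiag i).symm

def dvdMatrix (R : Type*) [Zero R] [One R] (s : m → ℕ) : Matrix m m R :=
  of fun i j => if s j ∣ s i then 1 else 0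

theorem det_dvdMatrix {s : m → ℕ} (hs : ∀ i, 0 < s i) (hinj : Injective s) :
    (dvdMatrix R s).det = 1 :=
  det_eq_one_of_unitriangular_along _ hinj
    (fun i _ hlt => if_neg fun hdvd => (Nat.le_of_dvd (hs i) hdvd).not_gt hlt)
    (fun _ => if_pos dvd_rfl)

theorem rank_dvdMatrix [StrongRankCondition R] {s : m → ℕ} (hs : ∀ i, 0 < s i)
    (hinj : Injective s) : (dvdMatrix R s).rank = Fintype.card m :=
  rank_of_isUnit _ ((isUnit_iff_isUnit_det _).mpr ((det_dvdMatrix (R := R) hs hinj) ▸ isUnit_one))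

end Matrix

theorem incidence_matrix_full_rank_general (n l : ℕ) (s : Fin n → ℕ) (f : Fin l → ℕ)
    (hs : ∀ i, 0 < s i) (hsinj : Function.Injective s)
    (hsub : ∀ i, ∃ k, f k = s i)
    (E : Matrix (Fin n) (Fin l) ℝ)
    (hE : ∀ i k, E i k = if f k ∣ s i then 1 else 0) :
    E.rank = n := by
  choose g hg using hsub
  have hcols : E.submatrix id g = Matrix.dvdMatrix ℝ s := by
    ext i j
    simp [hE, hg, Matrix.dvdMatrix]
  refine le_antisymm E.rank_le_height ?_
  calc n = (Matrix.dvdMatrix ℝ s).rank := by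
        rw [Matrix.rank_dvdMatrix hs hsinj, Fintype.card_fin]
    _ ≤ E.rank := hcols ▸ E.rank_submatrix_le id g

theorem incidence_matrix_full_rank (n l : ℕ) (s : Fin n → ℕ) (f : Fin l → ℕ)
    (hs : ∀ i, 0 < s i) (hsinj : Function.Injective s)
    (hf : ∀ k, 0 < f k) (hfinj : Function.Injective f)
    (hsub : ∀ i, ∃ k, f k = s i)
    (hfc : ∀ k d, 0 < d → d ∣ f k → ∃ k', f k' = d)
    (E : Matrix (Fin n) (Fin l) ℝ)
    (hE : ∀ i k, E i k = if f k ∣ s i then 1 else 0) :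
    E.rank = n :=
  incidence_matrix_full_rank_general n l s f hs hsinj hsub E hE
end

section
/- Let S be a factor-closed set of n distinct positive integers. Then for every nonzero integer vector x ∈ ℤⁿ, the quadratic form ∑_{i,j} gcd(s_i, s_j) x_i x_j is a positive integer, and it can be written as ∑_{k=1}^{n} φ(s_k) (∑_{i : s_k ∣ s_i} x_i)². -/
/-!
Since every divisor of `gcd(s_i, s_j)` is some `s_k`, Gauss's identity `∑_{d ∣ m} φ(d) = m` gives
`gcd(s_i, s_j) = ∑_{s_k ∣ s_i, s_k ∣ s_j} φ(s_k)`, and exchanging the order of summation turns the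
quadratic form into `∑_k φ(s_k) (∑_{s_k ∣ s_i} x_i)²`. For the index `k` maximising `s_k` among those
with `x_k ≠ 0`, the inner sum is just `x_k`, so one of these nonnegative terms is positive.
-/

open Finset

theorem sum_sum_sum_filter_mul_mul_eq_sum_mul_sq {ι κ R : Type*} [Fintype ι] [Fintype κ]
    [CommSemiring R] (P : κ → ι → Prop) [∀ k i, Decidable (P k i)] (w : κ → R) (x : ι → R) :
    ∑ i, ∑ j, (∑ k ∈ univ.filter (fun k => P k i ∧ P k j), w k) * x i * x j
      = ∑ k, w k * (∑ i ∈ univ.filter (P k), x i) ^ 2 := by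
  have lhs : ∀ i j, (∑ k ∈ univ.filter (fun k => P k i ∧ P k j), w k) * x i * x j
      = ∑ k, if P k i ∧ P k j then w k * x i * x j else 0 := fun i j => by
    rw [sum_mul, sum_mul, sum_filter]
  have rhs : ∀ k, w k * (∑ i ∈ univ.filter (P k), x i) ^ 2
      = ∑ i, ∑ j, if P k i ∧ P k j then w k * x i * x j else 0 := fun k => by
    rw [sq, sum_mul_sum, mul_sum]
    simp only [mul_sum, sum_filter, ite_and]
    refine sum_congr rfl fun i _ => ?_
    split_ifs <;> simp [mul_assoc]
  simp only [lhs, rhs]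
  calc _ = ∑ i, ∑ k, ∑ j, _ := sum_congr rfl fun i _ => sum_comm
    _ = _ := sum_comm

section FactorClosed

variable {ι : Type*} [Fintype ι] {s : ι → ℕ}

theorem image_filter_dvd_eq_divisors_s17 (hfc : ∀ i d, 0 < d → d ∣ s i → ∃ j, s j = d)
    {m : ℕ} (hm : m ≠ 0) {i : ι} (hmi : m ∣ s i) :
    (univ.filter fun k => s k ∣ m).image s = m.divisors := by
  ext d
  simp only [mem_image, mem_filter, mem_univ, true_and, Nat.mem_divisors, and_iff_left hm]
  constructor
  · rintro ⟨k, hk, rfl⟩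
    exact hk
  · intro hd
    obtain ⟨k, rfl⟩ := hfc i d (Nat.pos_of_dvd_of_pos hd (Nat.pos_of_ne_zero hm)) (hd.trans hmi)
    exact ⟨k, hd, rfl⟩

theorem sum_totient_filter_dvd_s17 (hsinj : Function.Injective s)
    (hfc : ∀ i d, 0 < d → d ∣ s i → ∃ j, s j = d) {m : ℕ} (hm : m ≠ 0) {i : ι} (hmi : m ∣ s i) :
    ∑ k ∈ univ.filter (fun k => s k ∣ m), (s k).totient = m := by
  rw [← sum_image hsinj.injOn, image_filter_dvd_eq_divisors_s17 hfc hm hmi, Nat.sum_totient]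

theorem gcd_eq_sum_totient (hsinj : Function.Injective s)
    (hfc : ∀ i d, 0 < d → d ∣ s i → ∃ j, s j = d) {i : ι} (hi : 0 < s i) (j : ι) :
    (s i).gcd (s j) = ∑ k ∈ univ.filter (fun k => s k ∣ s i ∧ s k ∣ s j), (s k).totient := by
  simp_rw [← Nat.dvd_gcd_iff]
  exact (sum_totient_filter_dvd_s17 hsinj hfc (Nat.gcd_pos_of_pos_left _ hi).ne'
    (Nat.gcd_dvd_left _ _)).symm

theorem exists_sum_filter_dvd_ne_zero {R : Type*} [AddCommMonoid R] (hs : ∀ i, 0 < s i)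
    (hsinj : Function.Injective s) {x : ι → R} (hx : x ≠ 0) :
    ∃ k, ∑ i ∈ univ.filter (fun i => s k ∣ s i), x i ≠ 0 := by
  classical
  obtain ⟨k, hk, hmax⟩ := exists_max_image (univ.filter fun i => x i ≠ 0) s
    (Function.ne_iff.1 hx |>.imp fun i hi => by simpa using hi)
  simp only [mem_filter, mem_univ, true_and] at hk hmax
  refine ⟨k, ?_⟩
  rwa [sum_eq_single_of_mem k (by simp) fun i hi hik => ?_]
  by_contra hxi
  simp only [mem_filter, mem_univ, true_and] at hi
  exact hik (hsinj ((hmax i hxi).antisymm (Nat.le_of_dvd (hs i) hi)))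

end FactorClosed

theorem gcd_quadratic_form_factor_closed (n : ℕ) (s : Fin n → ℕ)
    (hs : ∀ i, 0 < s i) (hsinj : Function.Injective s)
    (hfc : ∀ i d, 0 < d → d ∣ s i → ∃ j, s j = d)
    (x : Fin n → ℤ) (hx : x ≠ 0) :
    0 < ∑ i, ∑ j, (Nat.gcd (s i) (s j) : ℤ) * x i * x j ∧
    ∑ i, ∑ j, (Nat.gcd (s i) (s j) : ℤ) * x i * x j
      = ∑ k, (Nat.totient (s k) : ℤ)
          * (∑ i ∈ Finset.univ.filter (fun i => s k ∣ s i), x i) ^ 2 := by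
  have hsquares : ∑ i, ∑ j, (Nat.gcd (s i) (s j) : ℤ) * x i * x j
      = ∑ k, (Nat.totient (s k) : ℤ)
          * (∑ i ∈ Finset.univ.filter (fun i => s k ∣ s i), x i) ^ 2 := by
    simp only [gcd_eq_sum_totient hsinj hfc (hs _), Nat.cast_sum]
    exact sum_sum_sum_filter_mul_mul_eq_sum_mul_sq (fun k i => s k ∣ s i) _ x
  obtain ⟨k, hk⟩ := exists_sum_filter_dvd_ne_zero hs hsinj hx
  have hφ : 0 < (s k).totient := Nat.totient_pos.2 (hs k)
  exact ⟨hsquares ▸ sum_pos' (fun k _ => by positivity) ⟨k, mem_univ k, by positivity⟩, hsquares⟩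
end

section
/- Let (U, ≤) be a meet-semilattice, S = {s₁,…,sₙ} a finite meet-closed subset (s_i ⊓ s_j ∈ S for all i,j), and g : U → ℝ any function. Define Ψ on S inductively by Ψ(s_j) = g(s_j) − ∑_{s_i < s_j, s_i ∈ S} Ψ(s_i). Then det(g(s_i ⊓ s_j))_{i,j=1}^{n} = ∏_{i=1}^{n} Ψ(s_i). -/
/-!
Because `S` is meet-closed, the defining recursion of `Ψ` says exactly that
`g (s_i ⊓ s_j) = ∑_{s_k ≤ s_i, s_k ≤ s_j} Ψ(s_k)`, i.e. the meet matrix factors as `E · diag Ψ · Eᵀ`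
where `E` is the zeta matrix of `S` (`E i k = 1` iff `s_k ≤ s_i`, else `0`). Listing `S` along a linear
extension of its order makes `E` lower unitriangular, so `det E = 1`.
-/

open Finset Matrix

def zetaMatrix {ι α : Type*} (R : Type*) [Zero R] [One R] [LE α] [DecidableLE α] (s : ι → α) :
    Matrix ι ι R :=
  of fun i k => if s k ≤ s i then 1 else 0

section

variable {ι α : Type*} [Fintype ι] [DecidableEq ι]

theorem Matrix.det_eq_prod_diag_of_forall_not_le {R : Type*} [CommRing R] [PartialOrder α]
    {s : ι → α} (hs : Function.Injective s) (M : Matrix ι ι R)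
    (hM : ∀ i j, ¬ s j ≤ s i → M i j = 0) :
    M.det = ∏ i, M i i := by
  let _ : PartialOrder ι := PartialOrder.lift s hs
  let _ : Fintype (LinearExtension ι) := inferInstanceAs (Fintype ι)
  let _ : DecidableEq (LinearExtension ι) := inferInstanceAs (DecidableEq ι)
  let e : ι ≃ LinearExtension ι := Equiv.refl ι
  have hlower : (reindex e e M).IsLowerTriangular := fun a b hab => hM a b fun hba =>
    (OrderDual.toDual_lt_toDual.mp hab).not_ge (toLinearExtension.monotone (α := ι) hba)
  rw [← det_reindex_self e M, det_of_isLowerTriangular _ hlower]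
  rfl

theorem det_zetaMatrix {R : Type*} [CommRing R] [PartialOrder α] [DecidableLE α] {s : ι → α}
    (hs : Function.Injective s) : (zetaMatrix R s).det = 1 := by
  rw [det_eq_prod_diag_of_forall_not_le hs (zetaMatrix R s) fun i j h => if_neg h]
  exact prod_eq_one fun i _ => if_pos le_rfl

theorem filter_le_eq_insert_filter_lt [PartialOrder α] [DecidableLE α] [DecidableLT α]
    {s : ι → α} (hs : Function.Injective s) (j : ι) :
    univ.filter (fun k => s k ≤ s j) = insert j (univ.filter (fun k => s k < s j)) := by
  ext k
  simp only [mem_filter, mem_univ, true_and, mem_insert, le_iff_eq_or_lt, hs.eq_iff]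

theorem sum_filter_le_eq_of_eq_sub_sum_filter_lt {M : Type*} [AddCommGroup M] [PartialOrder α]
    [DecidableLE α] [DecidableLT α] {s : ι → α} (hs : Function.Injective s) {f : α → M}
    {Psi : ι → M} (hPsi : ∀ j, Psi j = f (s j) - ∑ i ∈ univ.filter (fun i => s i < s j), Psi i)
    (j : ι) : f (s j) = ∑ k ∈ univ.filter (fun k => s k ≤ s j), Psi k := by
  rw [filter_le_eq_insert_filter_lt hs, sum_insert (by simp), hPsi j, sub_add_cancel]

theorem of_inf_eq_zetaMatrix_mul_diagonal_mul_transpose {R : Type*} [CommSemiring R]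
    [SemilatticeInf α] [DecidableLE α] {s : ι → α} (hmc : ∀ i j, ∃ k, s k = s i ⊓ s j)
    {f : α → R} {Psi : ι → R}
    (hf : ∀ j, f (s j) = ∑ k ∈ univ.filter (fun k => s k ≤ s j), Psi k) :
    of (fun i j => f (s i ⊓ s j)) = zetaMatrix R s * diagonal Psi * (zetaMatrix R s)ᵀ := by
  ext i j
  obtain ⟨m, hm⟩ := hmc i j
  rw [of_apply, ← hm, hf m, sum_filter, mul_apply]
  refine sum_congr rfl fun k _ => ?_
  simp only [mul_diagonal, transpose_apply, zetaMatrix, of_apply, hm, le_inf_iff, ite_and]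
  split_ifs <;> simp

end

open scoped Classical in
theorem meet_matrix_det {U : Type*} [SemilatticeInf U]
    (n : ℕ) (s : Fin n → U) (hsinj : Function.Injective s)
    (hmc : ∀ i j, ∃ k, s k = s i ⊓ s j)
    (g : U → ℝ) (Psi : Fin n → ℝ)
    (hPsi : ∀ j, Psi j = g (s j)
      - ∑ i ∈ Finset.univ.filter (fun i => s i < s j), Psi i) :
    (Matrix.of fun i j : Fin n => g (s i ⊓ s j)).det = ∏ i, Psi i := by
  rw [of_inf_eq_zetaMatrix_mul_diagonal_mul_transpose hmc
      (sum_filter_le_eq_of_eq_sub_sum_filter_lt hsinj hPsi), det_mul, det_mul, det_transpose,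
    det_zetaMatrix hsinj, det_diagonal, one_mul, mul_one]
end
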